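/- The relaxed demand-based model and the relaxed origin-based model are equivalent in feasibility: the demand-based model (0-1 per-demand flows with conservation, capacity, and sub-path optimality constraints) has a feasible solution if and only if the origin-based model (0-1 per-origin tree indicators y with in-degree constraints, nonnegative aggregated flows f with conservation, flow bounds, and capacity constraints) has a feasible solution. -/

import Mathlib

/-!
Both models are linked through simple paths. For a fixed origin `s`, the used edges of a
demand-based solution enter every vertex `i ≠ s` at most once (sub-path constraint), and so do
the edges carrying positive origin-based flow `f s`, because `f ≤ y · d_s` and `y` has in-degree
at most one. In a nonnegative flow with this property and nonnegative surplus away from `s`,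
following the positive in-edges backwards from a vertex with positive surplus reaches `s` without
repeating a vertex: otherwise the vertices visited would form a set of positive total surplus that
no positive flow enters from outside. These paths give the routing `x` from `f`, and, aggregated by
origin, the pair `(y, f)` from `x`. The capacity bound for the routing is the same cut argument,
applied to the vertices lying beyond an edge `e` on the paths through `e`: their whole demand
enters through `e`.
-/

open Finset

namespace List

variable {α : Type*}

@[simp]
theorem consecutivePairs_cons_cons (a b : α) (l : List α) :
    (a :: b :: l).consecutivePairs = (a, b) :: (b :: l).consecutivePairs := rfl

theorem map_snd_consecutivePairs (l : List α) : l.consecutivePairs.map Prod.snd = l.tail :=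
  map_snd_zip (by simp)

theorem map_fst_consecutivePairs : ∀ l : List α, l.consecutivePairs.map Prod.fst = l.dropLast
  | [] | [_] => rfl
  | a :: b :: l => by simp [map_fst_consecutivePairs (b :: l)]

theorem Nodup.consecutivePairs {l : List α} (h : l.Nodup) : l.consecutivePairs.Nodup :=
  .of_map Prod.snd (l.map_snd_consecutivePairs ▸ h.sublist (tail_sublist l))

theorem snd_mem_tail_of_mem_consecutivePairs {l : List α} {e : α × α}
    (he : e ∈ l.consecutivePairs) : e.2 ∈ l.tail :=
  l.map_snd_consecutivePairs ▸ mem_map_of_mem he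

theorem exists_mem_consecutivePairs_of_mem_tail {l : List α} {w : α} (hw : w ∈ l.tail) :
    ∃ z, (z, w) ∈ l.consecutivePairs := by
  obtain ⟨e, he, rfl⟩ := mem_map.1 (l.map_snd_consecutivePairs ▸ hw)
  exact ⟨e.1, he⟩

theorem consecutivePairs_append_pair : ∀ (l : List α) (u w : α),
    (l ++ [u, w]).consecutivePairs = (l ++ [u]).consecutivePairs ++ [(u, w)]
  | [], _, _ => rfl
  | [_], _, _ => rfl
  | a :: b :: l, u, w => congrArg ((a, b) :: ·) (consecutivePairs_append_pair (b :: l) u w)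

theorem IsPrefix.consecutivePairs_subset {l₁ l₂ : List α} (h : l₁ <+: l₂) :
    l₁.consecutivePairs ⊆ l₂.consecutivePairs := by
  obtain ⟨c, rfl⟩ := h
  induction l₁ with
  | nil => simp
  | cons a l ih =>
    cases l with
    | nil => exact nil_subset _
    | cons b l => simpa using cons_subset_cons _ ih

theorem IsPrefix.exists_predecessor_of_mem_consecutivePairs {a l : List α} {w : α} {e : α × α}
    (hpre : a ++ [w] <+: l) (he : e ∈ (a ++ [w]).consecutivePairs) :
    ∃ u, (u, w) ∈ l.consecutivePairs ∧
      (e = (u, w) ∨ ∃ a', a' ++ [u] <+: l ∧ e ∈ (a' ++ [u]).consecutivePairs) := by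
  obtain rfl | ⟨a, u, rfl⟩ := a.eq_nil_or_concat
  · exact absurd he not_mem_nil
  rw [concat_eq_append] at hpre he
  have hpairs : (a ++ [u] ++ [w]).consecutivePairs = (a ++ [u]).consecutivePairs ++ [(u, w)] := by
    rw [append_assoc, singleton_append, consecutivePairs_append_pair]
  rw [hpairs, mem_append, mem_singleton] at he
  exact ⟨u, hpre.consecutivePairs_subset (by rw [hpairs]; simp),
    he.symm.imp_right fun he => ⟨a, (prefix_append _ [w]).trans hpre, he⟩⟩

end List

theorem Finset.eq_of_sum_le_one {α : Type*} {T : Finset α} {h : α → ℕ}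
    (hsum : ∑ a ∈ T, h a ≤ 1) {a b : α} (ha : a ∈ T) (hb : b ∈ T) (ha0 : 0 < h a)
    (hb0 : 0 < h b) : a = b := by
  classical
  by_contra hab
  have : h a + h b ≤ ∑ x ∈ T, h x := by
    rw [← sum_pair hab]
    exact sum_le_sum_of_subset (insert_subset ha (singleton_subset_iff.2 hb))
  omega

section Flow

variable {V : Type*}

structure IsPositivePath (L : Finset (V × V)) (g : V × V → ℝ) (s t : V) (p : List V) :
    Prop where
  nodup : p.Nodup
  head?_eq : p.head? = some s
  getLast?_eq : p.getLast? = some t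
  mem : ∀ e ∈ p.consecutivePairs, e ∈ L
  pos : ∀ e ∈ p.consecutivePairs, 0 < g e

namespace IsPositivePath

variable {L : Finset (V × V)} {g : V × V → ℝ} {s t : V} {p : List V}

theorem singleton (t : V) : IsPositivePath L g t t [t] :=
  ⟨List.nodup_singleton t, rfl, rfl, (fun _ h => nomatch h), (fun _ h => nomatch h)⟩

theorem cons {w z : V} (hp : IsPositivePath L g w t p) (hz : z ∉ p) (hL : (z, w) ∈ L)
    (hpos : 0 < g (z, w)) : IsPositivePath L g z t (z :: p) := by
  obtain ⟨q, rfl⟩ := List.head?_eq_some_iff.1 hp.head?_eq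
  refine ⟨List.nodup_cons.2 ⟨hz, hp.nodup⟩, rfl, ?_, ?_, ?_⟩
  · rw [List.getLast?_cons_cons]
    exact hp.getLast?_eq
  · simpa [hL] using hp.mem
  · simpa [hpos] using hp.pos

theorem snd_ne (hp : IsPositivePath L g s t p) {e : V × V} (he : e ∈ p.consecutivePairs) :
    e.2 ≠ s := by
  obtain ⟨q, rfl⟩ := List.head?_eq_some_iff.1 hp.head?_eq
  intro h
  exact (List.nodup_cons.1 hp.nodup).1 (h ▸ List.snd_mem_tail_of_mem_consecutivePairs he)

end IsPositivePath

variable [DecidableEq V]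

def inflow {R : Type*} [AddCommMonoid R] (L : Finset (V × V)) (g : V × V → R) (i : V) : R :=
  ∑ e ∈ L.filter (fun e => e.2 = i), g e

def outflow {R : Type*} [AddCommMonoid R] (L : Finset (V × V)) (g : V × V → R) (i : V) : R :=
  ∑ e ∈ L.filter (fun e => e.1 = i), g e

theorem sum_inflow {R : Type*} [AddCommMonoid R] (L : Finset (V × V)) (g : V × V → R)
    (S : Finset V) : ∑ w ∈ S, inflow L g w = ∑ e ∈ L.filter (fun e => e.2 ∈ S), g e := by
  simp only [inflow, sum_filter]
  rw [sum_comm]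
  simp

theorem sum_outflow {R : Type*} [AddCommMonoid R] (L : Finset (V × V)) (g : V × V → R)
    (S : Finset V) : ∑ w ∈ S, outflow L g w = ∑ e ∈ L.filter (fun e => e.1 ∈ S), g e := by
  simp only [outflow, sum_filter]
  rw [sum_comm]
  simp

theorem sum_inflow_sub_outflow_le {L : Finset (V × V)} {g : V × V → ℝ} (hg : ∀ e, 0 ≤ g e)
    (S : Finset V) (F : Finset (V × V))
    (hS : ∀ e ∈ L, e.2 ∈ S → 0 < g e → e.1 ∈ S ∨ e ∈ F) :
    ∑ w ∈ S, (inflow L g w - outflow L g w) ≤ ∑ e ∈ F, g e := by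
  have hterm : ∀ e ∈ L, (if e.2 ∈ S then g e else 0)
      ≤ (if e.1 ∈ S then g e else 0) + (if e ∈ F then g e else 0) := by
    intro e he
    have := hg e
    by_cases h2 : e.2 ∈ S
    · rcases this.eq_or_lt with h0 | hpos
      · simp [← h0]
      · rcases hS e he h2 hpos with h1 | h1 <;> simp only [if_pos h2, if_pos h1] <;>
          split_ifs <;> linarith
    · rw [if_neg h2]
      split_ifs <;> linarith
  have hF : ∑ e ∈ L.filter (· ∈ F), g e ≤ ∑ e ∈ F, g e :=
    sum_le_sum_of_subset_of_nonneg (fun e he => (mem_filter.1 he).2) (fun e _ _ => hg e)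
  rw [sum_sub_distrib, sum_inflow, sum_outflow]
  simp only [sum_filter] at hF ⊢
  linarith [sum_le_sum hterm, sum_add_distrib (s := L) (f := fun e => if e.1 ∈ S then g e else 0)
    (g := fun e => if e ∈ F then g e else 0)]

def pathFlow (p : List V) (e : V × V) : ℕ := if e ∈ p.consecutivePairs then 1 else 0

theorem sum_filter_pathFlow {R : Type*} [AddCommMonoidWithOne R] {L : Finset (V × V)}
    {p : List V} (hp : p.Nodup) (hL : ∀ e ∈ p.consecutivePairs, e ∈ L) (f : V × V → V) (i : V) :
    ∑ e ∈ L.filter (fun e => f e = i), (pathFlow p e : R)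
      = (p.consecutivePairs.map f).count i := by
  have hfin : (L.filter (fun e => f e = i)).filter (· ∈ p.consecutivePairs)
      = (p.consecutivePairs.filter (fun e => f e = i)).toFinset := by
    ext e
    simp only [mem_filter, List.mem_toFinset, List.mem_filter, decide_eq_true_eq]
    exact ⟨fun h => ⟨h.2, h.1.2⟩, fun h => ⟨⟨hL e h.1, h.2⟩, h.1⟩⟩
  simp only [pathFlow, Nat.cast_ite, Nat.cast_one, Nat.cast_zero]
  rw [sum_boole, hfin, List.toFinset_card_of_nodup (hp.consecutivePairs.filter _),
    ← List.countP_eq_length_filter, List.count, List.countP_map]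
  rfl

theorem pathFlow_le_one (p : List V) (e : V × V) : pathFlow p e ≤ 1 := by
  unfold pathFlow
  split <;> omega

namespace IsPositivePath

variable {L : Finset (V × V)} {g : V × V → ℝ} {s t : V} {p : List V}

theorem inflow_pathFlow {R : Type*} [AddCommMonoidWithOne R] (hp : IsPositivePath L g s t p)
    (i : V) : inflow L (fun e => (pathFlow p e : R)) i = p.tail.count i := by
  rw [inflow, sum_filter_pathFlow hp.nodup hp.mem, List.map_snd_consecutivePairs]

theorem outflow_pathFlow {R : Type*} [AddCommMonoidWithOne R] (hp : IsPositivePath L g s t p)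
    (i : V) : outflow L (fun e => (pathFlow p e : R)) i = p.dropLast.count i := by
  rw [outflow, sum_filter_pathFlow hp.nodup hp.mem, List.map_fst_consecutivePairs]

theorem inflow_sub_outflow_pathFlow {R : Type*} [CommRing R] (hp : IsPositivePath L g s t p)
    (hst : s ≠ t) (i : V) :
    inflow L (fun e => (pathFlow p e : R)) i - outflow L (fun e => (pathFlow p e : R)) i
      = if i = s then -1 else if i = t then 1 else 0 := by
  obtain ⟨q, hq⟩ := List.head?_eq_some_iff.1 hp.head?_eq
  obtain ⟨r, hr⟩ := List.getLast?_eq_some_iff.1 hp.getLast?_eq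
  have hcount := congrArg (List.count i) (hq.symm.trans hr)
  rw [hp.inflow_pathFlow, hp.outflow_pathFlow, hq, List.tail_cons, ← hq, hr,
    List.dropLast_concat]
  simp only [List.count_cons, List.count_append, List.count_nil, beq_iff_eq, zero_add]
    at hcount
  have hR := congrArg (Nat.cast : ℕ → R) hcount
  push_cast at hR
  obtain rfl | his := eq_or_ne i s
  · simp only [if_true, if_neg hst.symm] at hR ⊢
    linear_combination hR
  obtain rfl | hit := eq_or_ne i t
  · simp only [if_true, if_neg hst, if_neg his] at hR ⊢
    linear_combination hR
  · simp only [if_neg his.symm, if_neg hit.symm, if_neg his, if_neg hit] at hR ⊢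
    linear_combination hR

theorem one_le_inflow_pathFlow (hp : IsPositivePath L g s t p) (hst : s ≠ t) :
    1 ≤ inflow L (pathFlow p) t := by
  obtain ⟨q, hq⟩ := List.head?_eq_some_iff.1 hp.head?_eq
  obtain ⟨r, hr⟩ := List.getLast?_eq_some_iff.1 hp.getLast?_eq
  have ht : t ∈ s :: q := hq ▸ hr ▸ List.mem_concat_self
  have hin := hp.inflow_pathFlow (R := ℕ) t
  simp only [Nat.cast_id] at hin
  rw [hin, hq, List.tail_cons, Nat.one_le_iff_ne_zero, Ne, List.count_eq_zero,
    not_not]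
  exact (List.mem_cons.1 ht).resolve_left hst.symm

end IsPositivePath

theorem inflow_sub_outflow_sum_mul_pathFlow {L : Finset (V × V)} {ι : Type*} (K : Finset ι)
    (g : ι → V × V → ℝ) (s : V) (t : ι → V) (d : ι → ℝ) (P : ι → List V)
    (hP : ∀ k ∈ K, IsPositivePath L (g k) s (t k) (P k)) (hst : ∀ k ∈ K, s ≠ t k) (i : V) :
    inflow L (fun e => ∑ k ∈ K, d k * pathFlow (P k) e) i
        - outflow L (fun e => ∑ k ∈ K, d k * pathFlow (P k) e) i
      = ∑ k ∈ K.filter (fun k => t k = i), d k - if i = s then ∑ k ∈ K, d k else 0 := by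
  have hsplit : inflow L (fun e => ∑ k ∈ K, d k * pathFlow (P k) e) i
        - outflow L (fun e => ∑ k ∈ K, d k * pathFlow (P k) e) i
      = ∑ k ∈ K, d k * (inflow L (fun e => (pathFlow (P k) e : ℝ)) i
          - outflow L (fun e => (pathFlow (P k) e : ℝ)) i) := by
    simp only [inflow, outflow, mul_sub, mul_sum]
    rw [sum_comm, sum_comm (s := L.filter _), sum_sub_distrib]
  rw [hsplit,
    sum_congr rfl fun k hk => by rw [(hP k hk).inflow_sub_outflow_pathFlow (hst k hk) i]]
  obtain rfl | his := eq_or_ne i s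
  · have : K.filter (fun k => t k = i) = ∅ :=
      filter_eq_empty_iff.2 fun k hk h => hst k hk h.symm
    simp [this]
  · simp only [if_neg his, sub_zero, mul_ite, mul_one, mul_zero]
    rw [sum_filter]
    exact sum_congr rfl fun k _ => by simp only [eq_comm]

/-- Unlike a branching in the graph-theoretic sense, cycles of positive flow are not excluded. -/
structure IsBranchingFlow (L : Finset (V × V)) (g : V × V → ℝ) (s : V) (δ : V → ℝ) :
    Prop where
  nonneg : ∀ e, 0 ≤ g e
  surplus_nonneg : ∀ i ≠ s, 0 ≤ δ i
  inflow_eq : ∀ i ≠ s, inflow L g i = outflow L g i + δ i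
  eq_of_pos : ∀ e ∈ L, ∀ e' ∈ L, e.2 = e'.2 → e.2 ≠ s → 0 < g e → 0 < g e' → e = e'

namespace IsBranchingFlow

variable {L : Finset (V × V)} {g : V × V → ℝ} {s : V} {δ : V → ℝ}

theorem of_inflow_le_one {y : V × V → ℕ} (hg : ∀ e, 0 ≤ g e) (hδ : ∀ i ≠ s, 0 ≤ δ i)
    (hcons : ∀ i ≠ s, inflow L g i - outflow L g i = δ i) (hy : ∀ e, 0 < g e → 0 < y e)
    (hyin : ∀ i ≠ s, inflow L y i ≤ 1) : IsBranchingFlow L g s δ where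
  nonneg := hg
  surplus_nonneg := hδ
  inflow_eq i hi := by linarith [hcons i hi]
  eq_of_pos e he e' he' h2 hs hpos hpos' :=
    eq_of_sum_le_one (hyin e.2 hs) (mem_filter.2 ⟨he, rfl⟩) (mem_filter.2 ⟨he', h2.symm⟩)
      (hy e hpos) (hy e' hpos')

theorem sum_surplus_le (hF : IsBranchingFlow L g s δ) (S : Finset V) (F : Finset (V × V))
    (hsS : s ∉ S) (hS : ∀ e ∈ L, e.2 ∈ S → 0 < g e → e.1 ∈ S ∨ e ∈ F) :
    ∑ w ∈ S, δ w ≤ ∑ e ∈ F, g e := by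
  refine le_of_eq_of_le (sum_congr rfl fun w hw => ?_)
    (sum_inflow_sub_outflow_le hF.nonneg S F hS)
  rw [hF.inflow_eq w (ne_of_mem_of_not_mem hw hsS)]
  ring

theorem exists_isPositivePath_of_chain [Fintype V] (hF : IsBranchingFlow L g s δ) {t w : V}
    (ht : 0 < δ t) (q : List V) (hq : IsPositivePath L g w t q) (hsq : s ∉ q) :
    ∃ p, IsPositivePath L g s t p := by
  -- Otherwise no positive flow would enter the vertices of `q`, of total surplus `≥ δ t > 0`.
  obtain ⟨e, heL, he2, hpos, he1⟩ : ∃ e ∈ L, e.2 ∈ q ∧ 0 < g e ∧ e.1 ∉ q := by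
    by_contra! h
    have hδt : δ t ≤ ∑ w ∈ q.toFinset, δ w := by
      obtain ⟨r, hr⟩ := List.getLast?_eq_some_iff.1 hq.getLast?_eq
      refine single_le_sum (fun i hi => hF.surplus_nonneg i ?_) (by simp [hr])
      rintro rfl
      exact hsq (List.mem_toFinset.1 hi)
    have := hF.sum_surplus_le q.toFinset ∅ (by simpa using hsq)
      (fun e he h2 hpos => .inl (by simpa using h e he (by simpa using h2) hpos))
    simp only [sum_empty] at this
    linarith
  -- Every other vertex of `q` already receives its unique positive edge from within `q`.
  have hew : e.2 = w := by
    obtain ⟨q', rfl⟩ := List.head?_eq_some_iff.1 hq.head?_eq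
    refine (List.mem_cons.1 he2).resolve_right fun h => he1 ?_
    obtain ⟨z, hz⟩ := List.exists_mem_consecutivePairs_of_mem_tail (l := w :: q') h
    have := hF.eq_of_pos e heL _ (hq.mem _ hz) rfl (fun h' => hsq (h' ▸ he2)) hpos (hq.pos _ hz)
    rw [this]
    exact (List.of_mem_zip hz).1
  have hq' : IsPositivePath L g e.1 t (e.1 :: q) := hq.cons he1 (hew ▸ heL) (hew ▸ hpos)
  by_cases he1s : e.1 = s
  · exact ⟨_, he1s ▸ hq'⟩
  · exact hF.exists_isPositivePath_of_chain ht (e.1 :: q) hq'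
      (List.not_mem_cons_of_ne_of_not_mem (Ne.symm he1s) hsq)
termination_by Fintype.card V - q.length
decreasing_by
  have := hq'.nodup.length_le_card
  simp only [List.length_cons] at this ⊢
  omega

theorem exists_isPositivePath [Fintype V] (hF : IsBranchingFlow L g s δ) {t : V} (hts : t ≠ s)
    (ht : 0 < δ t) : ∃ p, IsPositivePath L g s t p :=
  hF.exists_isPositivePath_of_chain ht [t] (.singleton t) (by simpa using hts.symm)

theorem sum_mul_pathFlow_le [Fintype V] (hF : IsBranchingFlow L g s δ) {ι : Type*}
    (K : Finset ι) (t : ι → V) (d : ι → ℝ) (hd : ∀ k ∈ K, 0 ≤ d k) (P : ι → List V)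
    (hP : ∀ k ∈ K, IsPositivePath L g s (t k) (P k))
    (hδ : ∀ w ≠ s, ∑ k ∈ K.filter (fun k => t k = w), d k ≤ δ w) (e : V × V) :
    ∑ k ∈ K, d k * pathFlow (P k) e ≤ g e := by
  classical
  -- The vertices following `e` on one of the paths: positive flow enters them only through `e`,
  -- and they include the destinations of all paths through `e`.
  set S : Finset V := univ.filter fun w =>
    ∃ k ∈ K, ∃ a, a ++ [w] <+: P k ∧ e ∈ (a ++ [w]).consecutivePairs
  have hpred : ∀ w ∈ S,
      ∃ k ∈ K, ∃ u, (u, w) ∈ (P k).consecutivePairs ∧ (e = (u, w) ∨ u ∈ S) := by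
    intro w hw
    obtain ⟨k, hk, a, hpre, he⟩ := (mem_filter.1 hw).2
    obtain ⟨u, hu, h⟩ := hpre.exists_predecessor_of_mem_consecutivePairs he
    exact ⟨k, hk, u, hu, h.imp_right fun ⟨a', ha'⟩ => mem_filter.2 ⟨mem_univ u, k, hk, a', ha'⟩⟩
  have hsS : s ∉ S := fun hs => by
    obtain ⟨k, hk, u, hu, -⟩ := hpred s hs
    exact (hP k hk).snd_ne hu rfl
  have hclosed : ∀ e' ∈ L, e'.2 ∈ S → 0 < g e' → e'.1 ∈ S ∨ e' ∈ ({e} : Finset _) := by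
    intro e' he' hw hpos
    obtain ⟨k, hk, u, hu, h⟩ := hpred _ hw
    have he'u : e' = (u, e'.2) := hF.eq_of_pos e' he' _ ((hP k hk).mem _ hu) rfl
      (fun h => hsS (h ▸ hw)) hpos ((hP k hk).pos _ hu)
    rw [mem_singleton, he'u]
    exact h.symm.imp id Eq.symm
  have htS : K.filter (fun k => e ∈ (P k).consecutivePairs) ⊆ K.filter (fun k => t k ∈ S) := by
    intro k hk
    obtain ⟨hk, he⟩ := mem_filter.1 hk
    obtain ⟨r, hr⟩ := List.getLast?_eq_some_iff.1 (hP k hk).getLast?_eq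
    exact mem_filter.2 ⟨hk, mem_filter.2 ⟨mem_univ _, k, hk, r, hr ▸ List.prefix_refl _, hr ▸ he⟩⟩
  calc ∑ k ∈ K, d k * pathFlow (P k) e
      = ∑ k ∈ K.filter (fun k => e ∈ (P k).consecutivePairs), d k := by
        simp [pathFlow, sum_filter]
    _ ≤ ∑ k ∈ K.filter (fun k => t k ∈ S), d k :=
        sum_le_sum_of_subset_of_nonneg htS fun k hk _ => hd k (mem_filter.1 hk).1
    _ = ∑ w ∈ S, ∑ k ∈ K.filter (fun k => t k = w), d k := by
        rw [← sum_fiberwise_of_maps_to (fun k hk => (mem_filter.1 hk).2)]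
        refine sum_congr rfl fun w hw => ?_
        rw [filter_filter]
        exact sum_congr (filter_congr fun k _ => ⟨fun h => h.2, fun h => ⟨h ▸ hw, h⟩⟩)
          fun _ _ => rfl
    _ ≤ ∑ w ∈ S, δ w := sum_le_sum fun w hw => hδ w (ne_of_mem_of_not_mem hw hsS)
    _ ≤ g e := by simpa using hF.sum_surplus_le S {e} hsS hclosed

end IsBranchingFlow

end Flow

section Feasibility

def DemandFeasible {V D : Type*} [DecidableEq V] [Fintype D] (L : Finset (V × V))
    (c : V × V → ℝ) (sk tk : D → V) (d : D → ℝ) : Prop :=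
  ∃ x : D → V × V → ℕ,
    (∀ k e, x k e ≤ 1)
    ∧ (∀ k i, inflow L (fun e => (x k e : ℤ)) i - outflow L (fun e => (x k e : ℤ)) i
        = if i = sk k then -1 else if i = tk k then 1 else 0)
    ∧ (∀ e ∈ L, ∑ k, d k * (x k e : ℝ) ≤ c e)
    ∧ (∀ s i, i ≠ s → inflow L (fun e => (univ.filter fun k => sk k = s).sup (x · e)) i ≤ 1)

def OriginFeasible {V D : Type*} [Fintype V] [DecidableEq V] [Fintype D] (L : Finset (V × V))
    (c : V × V → ℝ) (sk tk : D → V) (d : D → ℝ) : Prop :=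
  ∃ (y : V → V × V → ℕ) (f : V → V × V → ℝ),
    (∀ s e, y s e ≤ 1) ∧ (∀ s e, 0 ≤ f s e)
    ∧ (∀ s e, f s e ≤ y s e * ∑ k ∈ univ.filter (fun k => sk k = s), d k)
    ∧ (∀ s i, inflow L (f s) i - outflow L (f s) i
        = ∑ k ∈ univ.filter (fun k => sk k = s ∧ tk k = i), d k
          - if i = s then ∑ k ∈ univ.filter (fun k => sk k = s), d k else 0)
    ∧ (∀ e ∈ L, ∑ s, f s e ≤ c e)
    ∧ (∀ s i, (i = s → inflow L (y s) i = 0)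
        ∧ ((∃ k, sk k = s ∧ tk k = i) → inflow L (y s) i = 1)
        ∧ (i ≠ s → inflow L (y s) i ≤ 1))

variable {V D : Type*} [Fintype V] [DecidableEq V] [Fintype D]
  {L : Finset (V × V)} {c : V × V → ℝ} {sk tk : D → V} {d : D → ℝ}

theorem originFeasible_of_paths (hd : ∀ k, 0 ≤ d k) (hst : ∀ k, sk k ≠ tk k)
    {g : D → V × V → ℝ} {P : D → List V} (hP : ∀ k, IsPositivePath L (g k) (sk k) (tk k) (P k))
    (hcap : ∀ e ∈ L, ∑ k, d k * pathFlow (P k) e ≤ c e)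
    (hsub : ∀ s i, i ≠ s →
      inflow L (fun e => (univ.filter fun k => sk k = s).sup fun k => pathFlow (P k) e) i ≤ 1) :
    OriginFeasible L c sk tk d := by
  refine ⟨fun s e => (univ.filter fun k => sk k = s).sup fun k => pathFlow (P k) e,
    fun s e => ∑ k ∈ univ.filter (fun k => sk k = s), d k * pathFlow (P k) e,
    fun s e => Finset.sup_le fun k _ => pathFlow_le_one _ _,
    fun s e => sum_nonneg fun k _ => mul_nonneg (hd k) (Nat.cast_nonneg _),
    fun s e => ?_, fun s i => ?_, fun e he => ?_, fun s i => ⟨fun his => ?_, ?_, hsub s i⟩⟩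
  · rw [mul_sum]
    refine sum_le_sum fun k hk => ?_
    rw [mul_comm]
    exact mul_le_mul_of_nonneg_right
      (Nat.cast_le.2 (le_sup (f := fun k => pathFlow (P k) e) hk)) (hd k)
  · rw [inflow_sub_outflow_sum_mul_pathFlow (univ.filter fun k => sk k = s) g s tk d P
      (fun k hk => (mem_filter.1 hk).2 ▸ hP k) (fun k hk => (mem_filter.1 hk).2 ▸ hst k),
      filter_filter]
  · rw [sum_fiberwise]
    exact hcap e he
  · refine sum_eq_zero fun e he => (Finset.sup_eq_bot_iff _ _).2 fun k hk => if_neg fun hmem =>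
      (hP k).snd_ne hmem ?_
    rw [(mem_filter.1 he).2, his, (mem_filter.1 hk).2]
  · rintro ⟨k, hks, rfl⟩
    refine le_antisymm (hsub s _ (hks ▸ (hst k).symm)) ?_
    exact ((hP k).one_le_inflow_pathFlow (hst k)).trans (sum_le_sum fun e _ =>
      le_sup (f := fun k => pathFlow (P k) e) (mem_filter.2 ⟨mem_univ k, hks⟩))

theorem DemandFeasible.originFeasible (hd : ∀ k, 0 ≤ d k) (hst : ∀ k, sk k ≠ tk k)
    (h : DemandFeasible L c sk tk d) : OriginFeasible L c sk tk d := by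
  obtain ⟨x, -, hxcons, hcap, hsub⟩ := h
  have hflow k : IsBranchingFlow L (fun e => (x k e : ℝ)) (sk k)
      (fun i => if i = tk k then 1 else 0) := by
    refine .of_inflow_le_one (fun e => Nat.cast_nonneg _) (fun i _ => by positivity)
      (fun i hi => ?_) (fun e hpos => (Nat.cast_pos.1 hpos).trans_le (le_sup (f := (x · e))
        (by simp))) (hsub (sk k))
    have hZ := hxcons k i
    rw [if_neg hi] at hZ
    simp only [inflow, outflow] at hZ ⊢
    exact_mod_cast hZ
  choose P hP using fun k => (hflow k).exists_isPositivePath (hst k).symm (by simp)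
  have hPx k e : pathFlow (P k) e ≤ x k e := by
    unfold pathFlow
    split_ifs with he
    · exact_mod_cast (hP k).pos e he
    · exact Nat.zero_le _
  refine originFeasible_of_paths hd hst hP (fun e he => ?_) fun s i hi =>
    (sum_le_sum fun e _ => sup_mono_fun fun k _ => hPx k e).trans (hsub s i hi)
  exact (sum_le_sum fun k _ => mul_le_mul_of_nonneg_left (Nat.cast_le.2 (hPx k e)) (hd k)).trans
    (hcap e he)

theorem OriginFeasible.demandFeasible (hd : ∀ k, 0 < d k) (hst : ∀ k, sk k ≠ tk k)
    (h : OriginFeasible L c sk tk d) : DemandFeasible L c sk tk d := by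
  obtain ⟨y, f, -, hf0, hfy, hfcons, hcap, hyin⟩ := h
  have hy s e (hpos : 0 < f s e) : 0 < y s e := Nat.pos_of_ne_zero fun h0 => by
    have := hfy s e
    rw [h0, Nat.cast_zero, zero_mul] at this
    linarith
  have hflow s : IsBranchingFlow L (f s) s
      (fun i => ∑ k ∈ univ.filter (fun k => sk k = s ∧ tk k = i), d k) :=
    .of_inflow_le_one (hf0 s) (fun i _ => sum_nonneg fun k _ => (hd k).le)
      (fun i hi => by rw [hfcons s i, if_neg hi, sub_zero]) (hy s) fun i hi => (hyin s i).2.2 hi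
  choose P hP using fun k => (hflow (sk k)).exists_isPositivePath (hst k).symm
    ((hd k).trans_le (single_le_sum (fun k _ => (hd k).le) (by simp)))
  refine ⟨fun k e => pathFlow (P k) e, fun k e => pathFlow_le_one _ _,
    fun k i => (hP k).inflow_sub_outflow_pathFlow (hst k) i, fun e he => ?_, fun s i hi => ?_⟩
  · calc ∑ k, d k * pathFlow (P k) e
        = ∑ s, ∑ k ∈ univ.filter (fun k => sk k = s), d k * pathFlow (P k) e :=
          (sum_fiberwise _ _ _).symm
      _ ≤ ∑ s, f s e := sum_le_sum fun s _ =>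
          (hflow s).sum_mul_pathFlow_le (univ.filter fun k => sk k = s) tk d
            (fun k _ => (hd k).le) P (fun k hk => (mem_filter.1 hk).2 ▸ hP k)
            (fun w _ => by rw [filter_filter]) e
      _ ≤ c e := hcap e he
  · refine (sum_le_sum fun e _ => Finset.sup_le fun k hk => ?_).trans ((hyin s i).2.2 hi)
    show pathFlow (P k) e ≤ y s e
    unfold pathFlow
    split_ifs with he
    · exact (mem_filter.1 hk).2 ▸ hy _ _ ((hP k).pos e he)
    · exact Nat.zero_le _

end Feasibility

theorem demand_origin_feasibility_equiv_general {V D : Type} [Fintype V] [DecidableEq V]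
    [Fintype D]
    (L : Finset (V × V)) (c : V × V → ℝ)
    (sk tk : D → V) (d : D → ℝ) (hd : ∀ k, 0 < d k) (hst : ∀ k, sk k ≠ tk k) :
    (∃ x : D → V × V → ℕ,
      (∀ k e, x k e ≤ 1)
      ∧ (∀ k (i : V),
          ∑ e ∈ L.filter (fun e => e.2 = i), (x k e : ℤ)
            - ∑ e ∈ L.filter (fun e => e.1 = i), (x k e : ℤ)
          = if i = sk k then -1 else if i = tk k then 1 else 0)
      ∧ (∀ e ∈ L, ∑ k : D, d k * (x k e : ℝ) ≤ c e)
      ∧ (∀ (s i : V), i ≠ s →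
          ∑ e ∈ L.filter (fun e => e.2 = i),
            (Finset.univ.filter (fun k => sk k = s)).sup (fun k => x k e) ≤ 1))
    ↔ (∃ (y : V → V × V → ℕ) (f : V → V × V → ℝ),
      (∀ s e, y s e ≤ 1) ∧ (∀ s e, 0 ≤ f s e)
      ∧ (∀ s e, f s e ≤ (y s e : ℝ) * ∑ k ∈ Finset.univ.filter (fun k => sk k = s), d k)
      ∧ (∀ (s i : V),
          ∑ e ∈ L.filter (fun e => e.2 = i), f s e
            - ∑ e ∈ L.filter (fun e => e.1 = i), f s e
          = (∑ k ∈ Finset.univ.filter (fun k => sk k = s ∧ tk k = i), d k)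
            - (if i = s then ∑ k ∈ Finset.univ.filter (fun k => sk k = s), d k else 0))
      ∧ (∀ e ∈ L, ∑ s : V, f s e ≤ c e)
      ∧ (∀ (s i : V),
          (i = s → ∑ e ∈ L.filter (fun e => e.2 = i), y s e = 0)
          ∧ ((∃ k, sk k = s ∧ tk k = i) → ∑ e ∈ L.filter (fun e => e.2 = i), y s e = 1)
          ∧ (i ≠ s → ∑ e ∈ L.filter (fun e => e.2 = i), y s e ≤ 1))) :=
  ⟨DemandFeasible.originFeasible (fun k => (hd k).le) hst, OriginFeasible.demandFeasible hd hst⟩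

/-- Feasibility equivalence of the relaxed demand-based model and the relaxed
origin-based model: the demand-based model (0-1 per-demand unit flows with conservation,
capacity and sub-path optimality constraints) is feasible if and only if the
origin-based model (0-1 per-origin indicators `y` with in-degree constraints and
nonnegative aggregated flows `f` with conservation, flow-bound and capacity
constraints) is feasible. -/
theorem demand_origin_feasibility_equiv {V D : Type} [Fintype V] [DecidableEq V]
    [Fintype D] [DecidableEq D]
    (L : Finset (V × V)) (c : V × V → ℝ)
    (sk tk : D → V) (d : D → ℝ) (hd : ∀ k, 0 < d k) (hst : ∀ k, sk k ≠ tk k) :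
    (∃ x : D → V × V → ℕ,
      (∀ k e, x k e ≤ 1)
      ∧ (∀ k (i : V),
          ∑ e ∈ L.filter (fun e => e.2 = i), (x k e : ℤ)
            - ∑ e ∈ L.filter (fun e => e.1 = i), (x k e : ℤ)
          = if i = sk k then -1 else if i = tk k then 1 else 0)
      ∧ (∀ e ∈ L, ∑ k : D, d k * (x k e : ℝ) ≤ c e)
      ∧ (∀ (s i : V), i ≠ s →
          ∑ e ∈ L.filter (fun e => e.2 = i),
            (Finset.univ.filter (fun k => sk k = s)).sup (fun k => x k e) ≤ 1))
    ↔ (∃ (y : V → V × V → ℕ) (f : V → V × V → ℝ),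
      (∀ s e, y s e ≤ 1) ∧ (∀ s e, 0 ≤ f s e)
      ∧ (∀ s e, f s e ≤ (y s e : ℝ) * ∑ k ∈ Finset.univ.filter (fun k => sk k = s), d k)
      ∧ (∀ (s i : V),
          ∑ e ∈ L.filter (fun e => e.2 = i), f s e
            - ∑ e ∈ L.filter (fun e => e.1 = i), f s e
          = (∑ k ∈ Finset.univ.filter (fun k => sk k = s ∧ tk k = i), d k)
            - (if i = s then ∑ k ∈ Finset.univ.filter (fun k => sk k = s), d k else 0))
      ∧ (∀ e ∈ L, ∑ s : V, f s e ≤ c e)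
      ∧ (∀ (s i : V),
          (i = s → ∑ e ∈ L.filter (fun e => e.2 = i), y s e = 0)
          ∧ ((∃ k, sk k = s ∧ tk k = i) → ∑ e ∈ L.filter (fun e => e.2 = i), y s e = 1)
          ∧ (i ≠ s → ∑ e ∈ L.filter (fun e => e.2 = i), y s e ≤ 1))) :=
  demand_origin_feasibility_equiv_general L c sk tk d hd hst
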